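/- Let T be a triangulated category that is the filtered union of a family of full triangulated subcategories T_i (indexed by a directed poset), each equipped with a bounded t-structure, such that for i ≤ j the inclusion T_i ⊆ T_j is t-exact. Then there is a unique t-structure on T such that each inclusion T_i → T is t-exact, given by T^{≤0} = ∪_i T_i^{≤0} and T^{≥0} = ∪_i T_i^{≥0}. -/

import Mathlib

/-!
Two t-structures with `t.le n ⊆ t'.le n` and `t.ge n ⊆ t'.ge n` for all `n` coincide: an object
of `t'.le n` is left orthogonal to `t'.ge (n + 1) ⊇ t.ge (n + 1)`, hence lies in `t.le n`, and
dually. The unions of the aisles and coaisles of the `S i` form a t-structure, since Hom-vanishing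
can be checked in a common `S k` by directedness, and truncation triangles exist in any `S i`
containing the object. Any t-structure making the inclusions t-exact contains this one, hence
equals it.
-/

open CategoryTheory Limits Pretriangulated Triangulated

namespace CategoryTheory.Triangulated

/-- A triangulated subcategory (the structure `Triangulated.Subcategory` of the older Mathlib,
removed since; restored here with its old fields). -/
structure Subcategory (C : Type*) [Category C] [HasZeroObject C] [HasShift C ℤ] [Preadditive C]
    [∀ (n : ℤ), (shiftFunctor C n).Additive] [Pretriangulated C] where
  P : C → Prop
  zero' : ∃ (Z : C) (_ : IsZero Z), P Z
  shift (X : C) (n : ℤ) : P X → P (X⟦n⟧)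
  ext₂' (T : Triangle C) (_ : T ∈ distTriang C) : P T.obj₁ → P T.obj₃ →
    ObjectProperty.isoClosure P T.obj₂

end CategoryTheory.Triangulated

namespace CategoryTheory.Triangulated.TStructure

variable {C : Type*} [Category C] [Preadditive C] [HasZeroObject C] [HasShift C ℤ]
  [∀ n : ℤ, (shiftFunctor C n).Additive] [Pretriangulated C]

lemma ext {t t' : TStructure C} (hle : t.le = t'.le) (hge : t.ge = t'.ge) : t = t' := by
  cases t; cases t'
  congr

lemma le_le_of_ge_le {t t' : TStructure C} (hge : ∀ n, t.ge n ≤ t'.ge n) (n : ℤ) :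
    t'.le n ≤ t.le n := fun X hX => by
  rw [t.le_iff_isLE, t.isLE_iff_orthogonal n (n + 1) rfl]
  intro Y f hY
  exact t'.zero_of_isLE_of_isGE f n (n + 1) (by lia) ⟨hX⟩ ⟨hge _ _ hY.ge⟩

lemma ge_le_of_le_le {t t' : TStructure C} (hle : ∀ n, t.le n ≤ t'.le n) (n : ℤ) :
    t'.ge n ≤ t.ge n := fun X hX => by
  rw [t.ge_iff_isGE, t.isGE_iff_orthogonal (n - 1) n (by lia)]
  intro Y f hY
  exact t'.zero_of_isLE_of_isGE f (n - 1) n (by lia) ⟨hle _ _ hY.le⟩ ⟨hX⟩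

lemma eq_of_le_le_of_ge_le {t t' : TStructure C} (hle : ∀ n, t.le n ≤ t'.le n)
    (hge : ∀ n, t.ge n ≤ t'.ge n) : t = t' :=
  ext (funext fun n => le_antisymm (hle n) (le_le_of_ge_le hge n))
    (funext fun n => le_antisymm (hge n) (ge_le_of_le_le hle n))

def ofDirectedUnion {ι : Type*} [Preorder ι] [IsDirected ι (· ≤ ·)]
    (LE GE : ι → ℤ → C → Prop) (hLE : Monotone LE) (hGE : Monotone GE)
    (hLEiso : ∀ i n (X Y : C), (X ≅ Y) → LE i n X → LE i n Y)
    (hGEiso : ∀ i n (X Y : C), (X ≅ Y) → GE i n X → GE i n Y)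
    (hLEshift : ∀ i (n a n' : ℤ), a + n' = n → ∀ X, LE i n X → LE i n' (X⟦a⟧))
    (hGEshift : ∀ i (n a n' : ℤ), a + n' = n → ∀ X, GE i n X → GE i n' (X⟦a⟧))
    (hLEmono : ∀ i n X, LE i n X → LE i (n + 1) X)
    (hGEmono : ∀ i n X, GE i (n + 1) X → GE i n X)
    (hzero : ∀ i (X Y : C) (f : X ⟶ Y), LE i 0 X → GE i 1 Y → f = 0)
    (htriangle : ∀ A : C, ∃ i, ∃ (X Y : C) (_ : LE i 0 X) (_ : GE i 1 Y)
      (f : X ⟶ A) (g : A ⟶ Y) (h : Y ⟶ X⟦(1 : ℤ)⟧), Triangle.mk f g h ∈ distTriang C) :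
    TStructure C where
  le n X := ∃ i, LE i n X
  ge n X := ∃ i, GE i n X
  le_isClosedUnderIsomorphisms n := ⟨fun e ⟨i, hX⟩ => ⟨i, hLEiso i n _ _ e hX⟩⟩
  ge_isClosedUnderIsomorphisms n := ⟨fun e ⟨i, hX⟩ => ⟨i, hGEiso i n _ _ e hX⟩⟩
  le_shift n a n' h X := fun ⟨i, hX⟩ => ⟨i, hLEshift i n a n' h X hX⟩
  ge_shift n a n' h X := fun ⟨i, hX⟩ => ⟨i, hGEshift i n a n' h X hX⟩
  zero' X Y f := fun ⟨i, hX⟩ ⟨j, hY⟩ => by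
    obtain ⟨k, hik, hjk⟩ := directed_of (· ≤ ·) i j
    exact hzero k X Y f (hLE hik 0 X hX) (hGE hjk 1 Y hY)
  le_zero_le X := fun ⟨i, hX⟩ => ⟨i, hLEmono i 0 X hX⟩
  ge_one_le X := fun ⟨i, hX⟩ => ⟨i, hGEmono i 0 X hX⟩
  exists_triangle_zero_one A := by
    obtain ⟨i, X, Y, hX, hY, f, g, h, mem⟩ := htriangle A
    exact ⟨X, Y, ⟨i, hX⟩, ⟨i, hY⟩, f, g, h, mem⟩

end CategoryTheory.Triangulated.TStructure

/-- Let `T` be a triangulated category which is the filtered union of full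
triangulated subcategories `S i` (indexed by a directed poset `ι`), each equipped with a
bounded t-structure `(LE i, GE i)`, such that for `i ≤ j` the inclusion `S i ⊆ S j` is
t-exact.  Then there is a unique t-structure on `T` for which all the inclusions
`S i → T` are t-exact, and it is given by `T^{≤n} = ⋃ᵢ (S i)^{≤n}`,
`T^{≥n} = ⋃ᵢ (S i)^{≥n}`. -/
theorem stmt_10 {C : Type*} [Category C] [Preadditive C] [HasZeroObject C] [HasShift C ℤ]
    [∀ n : ℤ, (shiftFunctor C n).Additive] [Pretriangulated C]
    {ι : Type*} [Preorder ι] [IsDirected ι (· ≤ ·)]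
    (S : ι → Triangulated.Subcategory C)
    (hmono : ∀ i j, i ≤ j → ∀ X, (S i).P X → (S j).P X)
    (hunion : ∀ X : C, ∃ i, (S i).P X)
    (LE GE : ι → ℤ → C → Prop)
    -- the t-structure on `S i` consists of objects of `S i`
    (hLEsub : ∀ i n X, LE i n X → (S i).P X)
    (hGEsub : ∀ i n X, GE i n X → (S i).P X)
    -- closure under isomorphisms
    (hLEiso : ∀ i n (X Y : C), (X ≅ Y) → LE i n X → LE i n Y)
    (hGEiso : ∀ i n (X Y : C), (X ≅ Y) → GE i n X → GE i n Y)
    -- compatibility with shifts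
    (hLEshift : ∀ i (n a n' : ℤ), a + n' = n → ∀ X, LE i n X → LE i n' (X⟦a⟧))
    (hGEshift : ∀ i (n a n' : ℤ), a + n' = n → ∀ X, GE i n X → GE i n' (X⟦a⟧))
    (hLEmono : ∀ i n X, LE i n X → LE i (n + 1) X)
    (hGEmono : ∀ i n X, GE i (n + 1) X → GE i n X)
    -- vanishing of Homs
    (hzero : ∀ i (X Y : C) (f : X ⟶ Y), LE i 0 X → GE i 1 Y → f = 0)
    -- truncation triangles within `S i`
    (htriangle : ∀ i (A : C), (S i).P A → ∃ (X Y : C) (_ : LE i 0 X) (_ : GE i 1 Y)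
      (f : X ⟶ A) (g : A ⟶ Y) (h : Y ⟶ X⟦(1 : ℤ)⟧), Triangle.mk f g h ∈ distTriang C)
    -- boundedness of the t-structure on each `S i`
    (hbounded : ∀ i X, (S i).P X → ∃ n : ℕ, LE i (n : ℤ) X ∧ GE i (-(n : ℤ)) X)
    -- t-exactness of the inclusions `S i ⊆ S j`
    (hexactLE : ∀ i j, i ≤ j → ∀ n X, LE i n X → LE j n X)
    (hexactGE : ∀ i j, i ≤ j → ∀ n X, GE i n X → GE j n X) :
    -- there is a unique t-structure on `C` making all inclusions `S i → C` t-exact ...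
    (∃! t : TStructure C,
      (∀ i n X, LE i n X → t.le n X) ∧ (∀ i n X, GE i n X → t.ge n X)) ∧
    -- ... and it is given by the unions of the `LE i` (resp. the `GE i`)
    (∀ t : TStructure C,
      ((∀ i n X, LE i n X → t.le n X) ∧ (∀ i n X, GE i n X → t.ge n X)) →
      (∀ n X, t.le n X ↔ ∃ i, LE i n X) ∧ (∀ n X, t.ge n X ↔ ∃ i, GE i n X)) := by
  let t₀ := TStructure.ofDirectedUnion LE GE hexactLE hexactGE hLEiso hGEiso hLEshift hGEshift
    hLEmono hGEmono hzero fun A => (hunion A).imp fun i hA => htriangle i A hA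
  have exact₀ : (∀ i n X, LE i n X → t₀.le n X) ∧ (∀ i n X, GE i n X → t₀.ge n X) :=
    ⟨fun i _ _ h => ⟨i, h⟩, fun i _ _ h => ⟨i, h⟩⟩
  have eq_t₀ (t : TStructure C)
      (ht : (∀ i n X, LE i n X → t.le n X) ∧ (∀ i n X, GE i n X → t.ge n X)) : t = t₀ :=
    (TStructure.eq_of_le_le_of_ge_le (t := t₀) (fun n X ⟨i, hX⟩ => ht.1 i n X hX)
      (fun n X ⟨i, hX⟩ => ht.2 i n X hX)).symm
  refine ⟨⟨t₀, exact₀, eq_t₀⟩, fun t ht => ?_⟩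
  obtain rfl := eq_t₀ t ht
  exact ⟨fun _ _ => Iff.rfl, fun _ _ => Iff.rfl⟩
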